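/- (Proposition 3.2, Lipschitz estimate for the derivative, case k = 1, stated without tensor products.) Let A be a unital C*-algebra over ℂ and let μ be a finite complex Borel measure on ℝ with ∫_ℝ (1 + |ξ| + ξ²) d|μ|(ξ) < ∞. Then for all self-adjoint X, Y, Z ∈ A, ‖ df_μ(X)(Z) − df_μ(Y)(Z) ‖ ≤ (∫_ℝ ξ² d|μ|(ξ)) · ‖X − Y‖ · ‖Z‖, where df_μ(X)(Z) = ∫_0^1 ∫_ℝ iξ · exp(iαξX) · Z · exp(i(1−α)ξX) dμ(ξ) dα is the Fréchet derivative of f_μ at X in direction Z. -/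

import Mathlib

open MeasureTheory

/-- `exp(i t X)` in a complex Banach algebra, for `t : ℝ`. -/
noncomputable def uexp {A : Type*} [NormedRing A] [NormedAlgebra ℂ A]
    (t : ℝ) (X : A) : A :=
  NormedSpace.exp ((Complex.I * (t : ℂ)) • X)

/-- `f_μ(X) := ∫_ℝ exp(iξX) dμ(ξ)` (Bochner integral in `A`), for a finite complex
Borel measure `μ` on `ℝ` represented by its total variation `ν = |μ|` together with a
unimodular density `ρ` (so that `dμ = ρ dν`). -/
noncomputable def fmu {A : Type*} [NormedRing A] [NormedAlgebra ℂ A] [CompleteSpace A]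
    (ν : Measure ℝ) (ρ : ℝ → ℂ) (X : A) : A :=
  ∫ ξ, ρ ξ • uexp ξ X ∂ν

/-- The first-derivative formula
`df_μ(X)(Y) = ∫₀¹ ∫_ℝ iξ exp(iαξX) Y exp(i(1−α)ξX) dμ(ξ) dα`. -/
noncomputable def dfmu {A : Type*} [NormedRing A] [NormedAlgebra ℂ A] [CompleteSpace A]
    (ν : Measure ℝ) (ρ : ℝ → ℂ) (X Y : A) : A :=
  ∫ α in (0 : ℝ)..1,
    ∫ ξ, (ρ ξ * (ξ : ℂ) * Complex.I) •
      (uexp (α * ξ) X * Y * uexp ((1 - α) * ξ) X) ∂ν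

/-! The exponentials `exp(itX)` of self-adjoint elements are unitary, and the path
`s ↦ exp(i(t-s)X) exp(isY)` has derivative of norm `‖X - Y‖`, so
`‖exp(itX) - exp(itY)‖ ≤ |t| ‖X - Y‖`. Hence the integrands of `df_μ(X)(Z)` and `df_μ(Y)(Z)`
differ by at most `|ξ| (|αξ| + |(1-α)ξ|) ‖X - Y‖ ‖Z‖ = ξ² ‖X - Y‖ ‖Z‖` for `α ∈ [0,1]`, and
integrating against `|μ|` and over `α` gives the bound. -/

open Complex NormedSpace

section BanachAlgebra

variable {A : Type*} [NormedRing A] [NormedAlgebra ℂ A]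

lemma uexp_eq_exp_smul (t : ℝ) (X : A) : uexp t X = exp (t • (I • X)) := by
  rw [uexp, ← algebraMap_smul ℂ t, smul_smul, Complex.coe_algebraMap, mul_comm]

lemma uexp_zero (X : A) : uexp 0 X = 1 := by
  simp [uexp]

variable [CompleteSpace A]

lemma hasDerivAt_uexp (X : A) (t : ℝ) :
    HasDerivAt (fun s : ℝ => uexp s X) (uexp t X * (I • X)) t := by
  simpa only [uexp_eq_exp_smul] using hasDerivAt_exp_smul_const (I • X) t

lemma hasDerivAt_uexp' (X : A) (t : ℝ) :
    HasDerivAt (fun s : ℝ => uexp s X) ((I • X) * uexp t X) t := by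
  simpa only [uexp_eq_exp_smul] using hasDerivAt_exp_smul_const' (I • X) t

@[fun_prop]
lemma continuous_uexp (X : A) : Continuous fun t : ℝ => uexp t X :=
  continuous_iff_continuousAt.2 fun t => (hasDerivAt_uexp X t).continuousAt

noncomputable def dfmuIntegrand (ρ : ℝ → ℂ) (W Z : A) (α ξ : ℝ) : A :=
  (ρ ξ * (ξ : ℂ) * I) • (uexp (α * ξ) W * Z * uexp ((1 - α) * ξ) W)

lemma dfmu_eq_integral_dfmuIntegrand (ν : Measure ℝ) (ρ : ℝ → ℂ) (W Z : A) :
    dfmu ν ρ W Z = ∫ α in (0 : ℝ)..1, ∫ ξ, dfmuIntegrand ρ W Z α ξ ∂ν :=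
  rfl

lemma continuous_dfmuIntegrand (ρ : ℝ → ℂ) (W Z : A) (ξ : ℝ) :
    Continuous fun α => dfmuIntegrand ρ W Z α ξ := by
  unfold dfmuIntegrand
  fun_prop

lemma stronglyMeasurable_dfmuIntegrand {ρ : ℝ → ℂ} (hρm : Measurable ρ) (W Z : A) (α : ℝ) :
    StronglyMeasurable (dfmuIntegrand ρ W Z α) := by
  refine ((hρm.mul measurable_ofReal).mul_const I).stronglyMeasurable.smul ?_
  exact Continuous.stronglyMeasurable (by fun_prop)

end BanachAlgebra

section CStarAlgebra

variable {A : Type*} [CStarAlgebra A]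

lemma uexp_mem_unitary {X : A} (hX : IsSelfAdjoint X) (t : ℝ) : uexp t X ∈ unitary A := by
  let : NormedAlgebra ℚ A := .restrictScalars ℚ ℂ A
  rw [uexp, mul_smul]
  exact exp_mem_unitary_of_mem_skewAdjoint
    ((IsSelfAdjoint.smul (conj_ofReal t) hX).smul_mem_skewAdjoint conj_I)

lemma norm_uexp_mul_mul_uexp {W V : A} (hW : IsSelfAdjoint W) (hV : IsSelfAdjoint V)
    (a b : ℝ) (Z : A) : ‖uexp a W * Z * uexp b V‖ = ‖Z‖ := by
  rw [CStarRing.norm_mul_mem_unitary _ (uexp_mem_unitary hV b),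
    CStarRing.norm_mem_unitary_mul _ (uexp_mem_unitary hW a)]

lemma norm_uexp_sub_uexp_le {X Y : A} (hX : IsSelfAdjoint X) (hY : IsSelfAdjoint Y) (t : ℝ) :
    ‖uexp t X - uexp t Y‖ ≤ |t| * ‖X - Y‖ := by
  set g : ℝ → A := fun s => uexp (t - s) X * uexp s Y
  have hg : ∀ s, HasDerivAt g (uexp (t - s) X * (I • (Y - X)) * uexp s Y) s := by
    intro s
    have hX' := (hasDerivAt_uexp X (t - s)).scomp s ((hasDerivAt_id s).const_sub t)
    convert hX'.mul (hasDerivAt_uexp' Y s) using 1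
    · rfl
    · simp only [Function.comp_apply, neg_one_smul, smul_sub]
      noncomm_ring
  have hbound : ∀ s ∈ Set.univ, ‖uexp (t - s) X * (I • (Y - X)) * uexp s Y‖ ≤ ‖X - Y‖ := by
    intro s _
    rw [norm_uexp_mul_mul_uexp hX hY, norm_smul, norm_I, one_mul, norm_sub_rev]
  have := convex_univ.norm_image_sub_le_of_norm_hasDerivWithin_le
    (fun s _ => (hg s).hasDerivWithinAt) hbound (Set.mem_univ 0) (Set.mem_univ t)
  rw [mul_comm]
  simpa [g, uexp_zero, norm_sub_rev] using this

lemma norm_uexp_mul_mul_uexp_sub_le {X Y : A} (hX : IsSelfAdjoint X) (hY : IsSelfAdjoint Y)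
    (a b : ℝ) (Z : A) :
    ‖uexp a X * Z * uexp b X - uexp a Y * Z * uexp b Y‖ ≤ (|a| + |b|) * ‖X - Y‖ * ‖Z‖ := by
  have hsplit : uexp a X * Z * uexp b X - uexp a Y * Z * uexp b Y
      = (uexp a X - uexp a Y) * Z * uexp b X + uexp a Y * (Z * (uexp b X - uexp b Y)) := by
    noncomm_ring
  rw [hsplit]
  calc _ ≤ ‖(uexp a X - uexp a Y) * Z * uexp b X‖ + ‖uexp a Y * (Z * (uexp b X - uexp b Y))‖ :=
        norm_add_le _ _
    _ = ‖(uexp a X - uexp a Y) * Z‖ + ‖Z * (uexp b X - uexp b Y)‖ := by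
        rw [CStarRing.norm_mul_mem_unitary _ (uexp_mem_unitary hX b),
          CStarRing.norm_mem_unitary_mul _ (uexp_mem_unitary hY a)]
    _ ≤ ‖uexp a X - uexp a Y‖ * ‖Z‖ + ‖Z‖ * ‖uexp b X - uexp b Y‖ :=
        add_le_add (norm_mul_le _ _) (norm_mul_le _ _)
    _ ≤ |a| * ‖X - Y‖ * ‖Z‖ + ‖Z‖ * (|b| * ‖X - Y‖) := by
        gcongr <;> exact norm_uexp_sub_uexp_le hX hY _
    _ = (|a| + |b|) * ‖X - Y‖ * ‖Z‖ := by ring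

lemma norm_mul_ofReal_mul_I_le {c : ℂ} (hc : ‖c‖ ≤ 1) (ξ : ℝ) : ‖c * (ξ : ℂ) * I‖ ≤ |ξ| := by
  rw [norm_mul, norm_mul, norm_I, mul_one, norm_real, Real.norm_eq_abs]
  exact mul_le_of_le_one_left (abs_nonneg ξ) hc

variable {ρ : ℝ → ℂ}

lemma norm_dfmuIntegrand_le (hρ : ∀ ξ, ‖ρ ξ‖ ≤ 1) {W : A} (hW : IsSelfAdjoint W) (Z : A)
    (α ξ : ℝ) : ‖dfmuIntegrand ρ W Z α ξ‖ ≤ |ξ| * ‖Z‖ := by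
  rw [dfmuIntegrand, norm_smul, norm_uexp_mul_mul_uexp hW hW]
  gcongr
  exact norm_mul_ofReal_mul_I_le (hρ ξ) ξ

lemma norm_dfmuIntegrand_sub_le (hρ : ∀ ξ, ‖ρ ξ‖ ≤ 1) {X Y : A} (hX : IsSelfAdjoint X)
    (hY : IsSelfAdjoint Y) (Z : A) {α : ℝ} (hα : α ∈ Set.Icc 0 1) (ξ : ℝ) :
    ‖dfmuIntegrand ρ X Z α ξ - dfmuIntegrand ρ Y Z α ξ‖ ≤ ξ ^ 2 * ‖X - Y‖ * ‖Z‖ := by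
  have habs : |α * ξ| + |(1 - α) * ξ| = |ξ| := by
    rw [abs_mul, abs_mul, abs_of_nonneg hα.1, abs_of_nonneg (sub_nonneg.2 hα.2)]
    ring
  rw [dfmuIntegrand, dfmuIntegrand, ← smul_sub, norm_smul]
  calc _ ≤ |ξ| * (|ξ| * ‖X - Y‖ * ‖Z‖) := by
        gcongr
        · exact norm_mul_ofReal_mul_I_le (hρ ξ) ξ
        · exact habs ▸ norm_uexp_mul_mul_uexp_sub_le hX hY _ _ Z
    _ = ξ ^ 2 * ‖X - Y‖ * ‖Z‖ := by
        rw [← sq_abs ξ]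
        ring

variable {ν : Measure ℝ}

lemma integrable_dfmuIntegrand (hρm : Measurable ρ) (hρ : ∀ ξ, ‖ρ ξ‖ ≤ 1)
    (hint1 : Integrable (fun ξ : ℝ => ξ) ν) {W : A} (hW : IsSelfAdjoint W) (Z : A) (α : ℝ) :
    Integrable (dfmuIntegrand ρ W Z α) ν :=
  (hint1.abs.mul_const ‖Z‖).mono'
    (stronglyMeasurable_dfmuIntegrand hρm W Z α).aestronglyMeasurable
    (.of_forall (norm_dfmuIntegrand_le hρ hW Z α))

lemma continuous_integral_dfmuIntegrand (hρm : Measurable ρ) (hρ : ∀ ξ, ‖ρ ξ‖ ≤ 1)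
    (hint1 : Integrable (fun ξ : ℝ => ξ) ν) {W : A} (hW : IsSelfAdjoint W) (Z : A) :
    Continuous fun α => ∫ ξ, dfmuIntegrand ρ W Z α ξ ∂ν :=
  continuous_of_dominated
    (fun α => (stronglyMeasurable_dfmuIntegrand hρm W Z α).aestronglyMeasurable)
    (fun α => .of_forall (norm_dfmuIntegrand_le hρ hW Z α)) (hint1.abs.mul_const ‖Z‖)
    (.of_forall (continuous_dfmuIntegrand ρ W Z))

lemma norm_integral_dfmuIntegrand_sub_le (hρm : Measurable ρ) (hρ : ∀ ξ, ‖ρ ξ‖ ≤ 1)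
    (hint1 : Integrable (fun ξ : ℝ => ξ) ν) (hint2 : Integrable (fun ξ : ℝ => ξ ^ 2) ν)
    {X Y : A} (hX : IsSelfAdjoint X) (hY : IsSelfAdjoint Y) (Z : A) {α : ℝ}
    (hα : α ∈ Set.Icc 0 1) :
    ‖∫ ξ, dfmuIntegrand ρ X Z α ξ ∂ν - ∫ ξ, dfmuIntegrand ρ Y Z α ξ ∂ν‖ ≤
      (∫ ξ, ξ ^ 2 ∂ν) * ‖X - Y‖ * ‖Z‖ := by
  rw [← integral_sub (integrable_dfmuIntegrand hρm hρ hint1 hX Z α)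
    (integrable_dfmuIntegrand hρm hρ hint1 hY Z α), ← integral_mul_const, ← integral_mul_const]
  exact norm_integral_le_of_norm_le ((hint2.mul_const _).mul_const _)
    (.of_forall (norm_dfmuIntegrand_sub_le hρ hX hY Z hα))

end CStarAlgebra

theorem dfmu_lipschitz_general {A : Type*} [CStarAlgebra A]
    (ν : Measure ℝ)
    (ρ : ℝ → ℂ) (hρm : Measurable ρ) (hρ1 : ∀ ξ, ‖ρ ξ‖ = 1)
    (hint1 : Integrable (fun ξ : ℝ => ξ) ν)
    (hint2 : Integrable (fun ξ : ℝ => ξ ^ 2) ν)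
    (X Y Z : A) (hX : IsSelfAdjoint X) (hY : IsSelfAdjoint Y) :
    ‖dfmu ν ρ X Z - dfmu ν ρ Y Z‖ ≤ (∫ ξ, ξ ^ 2 ∂ν) * ‖X - Y‖ * ‖Z‖ := by
  have hρ : ∀ ξ, ‖ρ ξ‖ ≤ 1 := fun ξ => (hρ1 ξ).le
  have hcont {W : A} (hW : IsSelfAdjoint W) :=
    (continuous_integral_dfmuIntegrand hρm hρ hint1 hW Z).intervalIntegrable (μ := volume) 0 1
  rw [dfmu_eq_integral_dfmuIntegrand, dfmu_eq_integral_dfmuIntegrand,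
    ← intervalIntegral.integral_sub (hcont hX) (hcont hY)]
  calc _ ≤ (∫ ξ, ξ ^ 2 ∂ν) * ‖X - Y‖ * ‖Z‖ * |1 - 0| :=
        intervalIntegral.norm_integral_le_of_norm_le_const fun α hα =>
          norm_integral_dfmuIntegrand_sub_le hρm hρ hint1 hint2 hX hY Z
            (Set.Ioc_subset_Icc_self (by rwa [Set.uIoc_of_le zero_le_one] at hα))
    _ = (∫ ξ, ξ ^ 2 ∂ν) * ‖X - Y‖ * ‖Z‖ := by norm_num

/-- Proposition 3.2, Lipschitz estimate for the derivative, case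
`k = 1`. Let `A` be a unital C*-algebra over `ℂ` and `μ` a finite complex Borel
measure on `ℝ` (given by its total variation `ν` and unimodular density `ρ`) with
`∫ (1+|ξ|+ξ²) d|μ|(ξ) < ∞`. Then for all self-adjoint `X, Y, Z ∈ A`,
`‖df_μ(X)(Z) − df_μ(Y)(Z)‖ ≤ (∫ ξ² d|μ|(ξ)) ‖X − Y‖ ‖Z‖`, where
`df_μ(X)(Z) = ∫₀¹ ∫_ℝ iξ exp(iαξX) Z exp(i(1−α)ξX) dμ(ξ) dα` is the Fréchet
derivative of `f_μ` at `X` in direction `Z`. -/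
theorem dfmu_lipschitz {A : Type*} [CStarAlgebra A]
    (ν : Measure ℝ) [IsFiniteMeasure ν]
    (ρ : ℝ → ℂ) (hρm : Measurable ρ) (hρ1 : ∀ ξ, ‖ρ ξ‖ = 1)
    (hint1 : Integrable (fun ξ : ℝ => ξ) ν)
    (hint2 : Integrable (fun ξ : ℝ => ξ ^ 2) ν)
    (X Y Z : A) (hX : IsSelfAdjoint X) (hY : IsSelfAdjoint Y)
    (hZ : IsSelfAdjoint Z) :
    ‖dfmu ν ρ X Z - dfmu ν ρ Y Z‖ ≤ (∫ ξ, ξ ^ 2 ∂ν) * ‖X - Y‖ * ‖Z‖ :=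
  dfmu_lipschitz_general ν ρ hρm hρ1 hint1 hint2 X Y Z hX hY
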